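/- arXiv:1508.05079 — 2 statements merged into one kernel-verified Lean document; each statement's English description precedes it below -/
import Mathlib

section
/- Let ε ∈ {1, −1}, let ν be a nonnegative integer, let α be a positive integer, and let x ∈ ℤ. Suppose U : ℕ → ℤ satisfies the U-recurrence and A : ℕ × ℕ → ℤ satisfies the A-recurrence. Then for every k ≥ 1 and every N ≥ 1 the identity (N+ν−1)^k·x^{kα} + U(k) = (N+ν)·x^α·A(k−1, N) − ε·A(k−1, N−1) holds in ℤ. -/
/-!
With `y = x ^ α`, both recurrences have the same left-hand side `L f k`, where `L` is a linear
operator on sequences whose coefficient of `f (k + 1)` is `1`. Hence a sequence `D` with `D 1 = 0`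
and `L D k = 0` for `k ≥ 1` vanishes on `k ≥ 1`. Take `D` to be the left-hand side minus the
right-hand side of the claimed identity: by the binomial theorem, `L` sends `ℓ ↦ ((M - 1) y) ^ ℓ`
to `y ^ (k + 1) (M ^ (k + 1) - 1) - ε ((M - 1) y) ^ k`, with `M = N + ν`, and together with the
U-recurrence and the A-recurrences at `N` and `N - 1` this gives `L D = 0`.
-/

open Finset

lemma sum_Icc_one_choose_mul_pow {R : Type*} [CommRing R] (c : R) (n : ℕ) :
    ∑ ℓ ∈ Icc 1 n, (n.choose ℓ : R) * c ^ ℓ = (c + 1) ^ n - 1 := by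
  rw [add_pow, Nat.range_succ_eq_Icc_zero, ← insert_Icc_add_one_left_eq_Icc (Nat.zero_le n),
    sum_insert (by simp)]
  simp only [one_pow, mul_one, pow_zero, Nat.choose_zero_right, Nat.cast_one, zero_add, mul_comm]
  ring

section BinomRec

variable {R : Type*} [CommRing R] (y ε : R)

/-- With `y = x ^ α`, the left-hand side of both the U- and the A-recurrence at `k`. -/
def binomRec : (ℕ → R) →ₗ[R] (ℕ → R) where
  toFun f k := ∑ ℓ ∈ Icc 1 (k + 1), ((k + 1).choose ℓ : R) * y ^ (k + 1 - ℓ) * f ℓ - ε * f k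
  map_add' f g := by
    ext k
    simp only [Pi.add_apply, mul_add, sum_add_distrib]
    ring
  map_smul' c f := by
    ext k
    simp only [Pi.smul_apply, smul_eq_mul, RingHom.id_apply, mul_sub, mul_sum]
    congr 1
    · exact sum_congr rfl fun _ _ => by ring
    · ring

lemma binomRec_apply (f : ℕ → R) (k : ℕ) :
    binomRec y ε f k =
      ∑ ℓ ∈ Icc 1 (k + 1), ((k + 1).choose ℓ : R) * y ^ (k + 1 - ℓ) * f ℓ - ε * f k :=
  rfl

lemma binomRec_pow_apply (x : R) (α : ℕ) (f : ℕ → R) (k : ℕ) :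
    binomRec (x ^ α) ε f k =
      ∑ ℓ ∈ Icc 1 (k + 1), ((k + 1).choose ℓ : R) * x ^ ((k + 1 - ℓ) * α) * f ℓ - ε * f k := by
  simp only [binomRec_apply, ← pow_mul']

lemma binomRec_apply_eq_add (f : ℕ → R) (k : ℕ) :
    binomRec y ε f k =
      f (k + 1) + ∑ ℓ ∈ Icc 1 k, ((k + 1).choose ℓ : R) * y ^ (k + 1 - ℓ) * f ℓ - ε * f k := by
  rw [binomRec_apply, sum_Icc_succ_top (by omega)]
  simp only [Nat.choose_self, Nat.cast_one, Nat.sub_self, pow_zero, one_mul]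
  ring

lemma binomRec_pow (c : R) (k : ℕ) :
    binomRec y ε (fun ℓ => (c * y) ^ ℓ) k =
      y ^ (k + 1) * ((c + 1) ^ (k + 1) - 1) - ε * (c * y) ^ k := by
  rw [binomRec_apply, ← sum_Icc_one_choose_mul_pow, mul_sum]
  congr 1
  refine sum_congr rfl fun ℓ hℓ => ?_
  obtain ⟨-, hℓ⟩ := mem_Icc.mp hℓ
  rw [mul_pow, show y ^ (k + 1) = y ^ (k + 1 - ℓ) * y ^ ℓ by rw [← pow_add, Nat.sub_add_cancel hℓ]]
  ring

lemma eq_zero_of_binomRec_eq_zero {f : ℕ → R} (h1 : f 1 = 0)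
    (h : ∀ k, 1 ≤ k → binomRec y ε f k = 0) {k : ℕ} (hk : 1 ≤ k) : f k = 0 := by
  suffices ∀ n, 1 ≤ n → ∀ ℓ ∈ Icc 1 n, f ℓ = 0 from this k hk k (mem_Icc.mpr ⟨hk, le_rfl⟩)
  intro n hn
  induction n, hn using Nat.le_induction with
  | base => simpa using h1
  | succ n hn ih =>
    have htop : f (n + 1) = 0 := by
      have hlow : ∑ ℓ ∈ Icc 1 n, ((n + 1).choose ℓ : R) * y ^ (n + 1 - ℓ) * f ℓ = 0 :=
        sum_eq_zero fun ℓ hℓ => by rw [ih ℓ hℓ, mul_zero]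
      have := h n hn
      rwa [binomRec_apply_eq_add, hlow, ih n (mem_Icc.mpr ⟨hn, le_rfl⟩), mul_zero, add_zero,
        sub_zero] at this
    intro ℓ hℓ
    rw [← insert_Icc_right_eq_Icc_add_one (by omega), mem_insert] at hℓ
    rcases hℓ with rfl | hℓ
    exacts [htop, ih ℓ hℓ]

end BinomRec

theorem stmt_8_general (ε : ℤ) (ν : ℕ) (α : ℕ)
    (x : ℤ) (U : ℕ → ℤ) (A : ℕ → ℕ → ℤ)
    (hU1 : U 1 = x ^ α - ε)
    (hU : ∀ k : ℕ, 1 ≤ k →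
      (∑ ℓ ∈ Finset.Icc 1 (k + 1),
          ((k + 1).choose ℓ : ℤ) * x ^ ((k + 1 - ℓ) * α) * U ℓ) -
        ε * U k - x ^ ((k + 1) * α) = 0)
    (hA0 : ∀ N : ℕ, A 0 N = 1)
    (hA : ∀ k : ℕ, 1 ≤ k → ∀ N : ℕ,
      (∑ ℓ ∈ Finset.Icc 1 (k + 1),
          ((k + 1).choose ℓ : ℤ) * x ^ ((k + 1 - ℓ) * α) * A (ℓ - 1) N) -
        ε * A (k - 1) N - ((N : ℤ) + ν) ^ k * x ^ (k * α) = 0) :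
    ∀ k : ℕ, 1 ≤ k → ∀ N : ℕ, 1 ≤ N →
      ((N : ℤ) + ν - 1) ^ k * x ^ (k * α) + U k =
        ((N : ℤ) + ν) * x ^ α * A (k - 1) N - ε * A (k - 1) (N - 1) := by
  intro k hk N hN
  set y := x ^ α
  have hpow (j : ℕ) : x ^ (j * α) = y ^ j := pow_mul' x j α
  have hUrec (k : ℕ) (hk : 1 ≤ k) : binomRec y ε U k = y ^ (k + 1) := by
    rw [binomRec_pow_apply, ← hpow]
    linear_combination hU k hk
  have hArec (n k : ℕ) (hk : 1 ≤ k) :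
      binomRec y ε (fun ℓ => A (ℓ - 1) n) k = ((n : ℤ) + ν) ^ k * y ^ k := by
    rw [binomRec_pow_apply, ← hpow]
    linear_combination hA k hk n
  let D : ℕ → ℤ := (fun ℓ => (((N : ℤ) + ν - 1) * y) ^ ℓ) + U -
    (((N : ℤ) + ν) * y) • (fun ℓ => A (ℓ - 1) N) + ε • (fun ℓ => A (ℓ - 1) (N - 1))
  have hD (k : ℕ) (hk : 1 ≤ k) : binomRec y ε D k = 0 := by
    simp only [D, map_add, map_sub, map_smul, Pi.add_apply, Pi.sub_apply, Pi.smul_apply,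
      smul_eq_mul, binomRec_pow, hUrec k hk, hArec N k hk, hArec (N - 1) k hk, Nat.cast_sub hN]
    rw [mul_pow]
    ring
  have hD1 : D 1 = 0 := by
    simp only [D, Pi.add_apply, Pi.sub_apply, Pi.smul_apply, smul_eq_mul, hU1, Nat.sub_self, hA0]
    ring
  have hDk := eq_zero_of_binomRec_eq_zero y ε hD1 hD hk
  simp only [D, Pi.add_apply, Pi.sub_apply, Pi.smul_apply, smul_eq_mul, mul_pow] at hDk
  rw [hpow]
  linear_combination hDk

theorem stmt_8 (ε : ℤ) (hε : ε = 1 ∨ ε = -1) (ν : ℕ) (α : ℕ) (hα : 0 < α)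
    (x : ℤ) (U : ℕ → ℤ) (A : ℕ → ℕ → ℤ)
    (hU1 : U 1 = x ^ α - ε)
    (hU : ∀ k : ℕ, 1 ≤ k →
      (∑ ℓ ∈ Finset.Icc 1 (k + 1),
          ((k + 1).choose ℓ : ℤ) * x ^ ((k + 1 - ℓ) * α) * U ℓ) -
        ε * U k - x ^ ((k + 1) * α) = 0)
    (hA0 : ∀ N : ℕ, A 0 N = 1)
    (hA : ∀ k : ℕ, 1 ≤ k → ∀ N : ℕ,
      (∑ ℓ ∈ Finset.Icc 1 (k + 1),
          ((k + 1).choose ℓ : ℤ) * x ^ ((k + 1 - ℓ) * α) * A (ℓ - 1) N) -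
        ε * A (k - 1) N - ((N : ℤ) + ν) ^ k * x ^ (k * α) = 0) :
    ∀ k : ℕ, 1 ≤ k → ∀ N : ℕ, 1 ≤ N →
      ((N : ℤ) + ν - 1) ^ k * x ^ (k * α) + U k =
        ((N : ℤ) + ν) * x ^ α * A (k - 1) N - ε * A (k - 1) (N - 1) :=
  stmt_8_general ε ν α x U A hU1 hU hA0 hA
end

section
/- Let ε ∈ {1, −1}, let ν be a nonnegative integer, let α be a positive integer, and let x ∈ ℤ. Then for every prime p, the function n ↦ ε^n·(n+ν)!·[(n+ν+1)·x^α − ε]·x^{αn}, with values viewed in ℚ_p, has sum −ε·ν! in ℚ_p. -/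
/-!
With `g n = ε ^ (n + 1) * (n + ν)! * x ^ (α * n)`, the identity `ε ^ 2 = 1` makes the `n`-th term
equal to `g (n + 1) - g n`, so the series telescopes. Since `p ^ ⌊m / p⌋` divides `m!`, the
factorials tend to `0` in `ℚ_p`, hence so does `g`, and the sum is `-g 0 = -ε * ν!`.
-/

open Filter Topology Nat

theorem NonarchimedeanAddGroup.hasSum_sub_of_tendsto_zero {G : Type*} [AddCommGroup G]
    [UniformSpace G] [IsUniformAddGroup G] [NonarchimedeanAddGroup G] [CompleteSpace G]
    [T2Space G] {g : ℕ → G} (hg : Tendsto g atTop (𝓝 0)) :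
    HasSum (fun n => g (n + 1) - g n) (-g 0) := by
  have hterms : Tendsto (fun n => g (n + 1) - g n) cofinite (𝓝 0) := by
    rw [Nat.cofinite_eq_atTop, ← sub_zero (0 : G)]
    exact (hg.comp (tendsto_add_atTop_nat 1)).sub hg
  refine ((summable_of_tendsto_cofinite_zero hterms).hasSum_iff_tendsto_nat).2 ?_
  simp_rw [Finset.sum_range_sub g, ← zero_sub]
  exact hg.sub_const (g 0)

theorem Nat.pow_dvd_factorial_mul (p k : ℕ) [Fact p.Prime] : p ^ k ∣ (p * k)! :=
  (pow_dvd_pow p (by rw [padicValNat_factorial_mul]; omega)).trans pow_padicValNat_dvd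

theorem Nat.pow_div_dvd_factorial (p n : ℕ) [Fact p.Prime] : p ^ (n / p) ∣ n ! :=
  (pow_dvd_factorial_mul p (n / p)).trans (factorial_dvd_factorial (Nat.mul_div_le n p))

theorem Padic.tendsto_norm_factorial_zero (p : ℕ) [hp : Fact p.Prime] :
    Tendsto (fun n : ℕ => ‖(n ! : ℚ_[p])‖) atTop (𝓝 0) := by
  have hbound (n : ℕ) : ‖(n ! : ℚ_[p])‖ ≤ ((p : ℝ)⁻¹) ^ (n / p) := by
    have := (Padic.norm_int_le_pow_iff_dvd (n ! : ℤ) (n / p)).2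
      (mod_cast Nat.pow_div_dvd_factorial p n)
    rwa [zpow_neg, zpow_natCast, ← inv_pow, Int.cast_natCast] at this
  have hgeom : Tendsto (fun k : ℕ => ((p : ℝ)⁻¹) ^ k) atTop (𝓝 0) :=
    tendsto_pow_atTop_nhds_zero_of_lt_one (by positivity)
      (inv_lt_one_of_one_lt₀ (mod_cast hp.out.one_lt))
  exact squeeze_zero (fun _ => norm_nonneg _) hbound
    (hgeom.comp (map_div_atTop_eq_nat p hp.out.pos).le)

theorem stmt_16_general (ε : ℤ) (hε : ε = 1 ∨ ε = -1) (ν : ℕ) (α : ℕ)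
    (x : ℤ) (p : ℕ) [Fact (Nat.Prime p)] :
    HasSum
      (fun n : ℕ =>
        ((ε ^ n * ((n + ν).factorial : ℤ) *
            (((n : ℤ) + ν + 1) * x ^ α - ε) * x ^ (α * n) : ℤ) : ℚ_[p]))
      ((-ε * (ν.factorial : ℤ) : ℤ) : ℚ_[p]) := by
  set g : ℕ → ℚ_[p] := fun n => ((ε ^ (n + 1) * x ^ (α * n) : ℤ) : ℚ_[p]) * ((n + ν)! : ℚ_[p])
  have hε2 : (ε : ℚ_[p]) ^ 2 = 1 := by rcases hε with rfl | rfl <;> norm_num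
  have hterm (n : ℕ) : ((ε ^ n * ((n + ν).factorial : ℤ) *
      (((n : ℤ) + ν + 1) * x ^ α - ε) * x ^ (α * n) : ℤ) : ℚ_[p]) = g (n + 1) - g n := by
    simp only [g, show n + 1 + ν = n + ν + 1 by omega, factorial_succ, mul_add, pow_add]
    push_cast
    linear_combination -(ε : ℚ_[p]) ^ n * ((n + ν)! : ℚ_[p]) * ((n : ℚ_[p]) + ν + 1) *
      (x : ℚ_[p]) ^ α * (x : ℚ_[p]) ^ (α * n) * hε2
  have hg : Tendsto g atTop (𝓝 0) := by
    rw [tendsto_zero_iff_norm_tendsto_zero]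
    refine squeeze_zero (fun _ => norm_nonneg _) (fun n => ?_)
      ((Padic.tendsto_norm_factorial_zero p).comp (tendsto_add_atTop_nat ν))
    simpa only [g, norm_mul, Function.comp_apply] using
      mul_le_of_le_one_left (norm_nonneg _) (Padic.norm_int_le_one _)
  have hvalue : ((-ε * (ν ! : ℤ) : ℤ) : ℚ_[p]) = -g 0 := by simp [g]
  rw [hvalue, funext hterm]
  exact NonarchimedeanAddGroup.hasSum_sub_of_tendsto_zero hg

theorem stmt_16 (ε : ℤ) (hε : ε = 1 ∨ ε = -1) (ν : ℕ) (α : ℕ) (hα : 0 < α)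
    (x : ℤ) (p : ℕ) [Fact (Nat.Prime p)] :
    HasSum
      (fun n : ℕ =>
        ((ε ^ n * ((n + ν).factorial : ℤ) *
            (((n : ℤ) + ν + 1) * x ^ α - ε) * x ^ (α * n) : ℤ) : ℚ_[p]))
      ((-ε * (ν.factorial : ℤ) : ℤ) : ℚ_[p]) :=
  stmt_16_general ε hε ν α x p
end
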